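/- Let γ ≥ 1 and h ∈ (0,1], let 𝒫 be the projection operator, and let ζ : Ω → ℝ^d be a random variable on a probability space (Ω, F, ℙ) with E[‖ζ‖^{8γ+2}] < ∞. Then there is a constant C, independent of ζ, h, d and γ (one may take C = 1), such that E[‖ζ − 𝒫(ζ)‖²] ≤ C h² E[‖ζ‖^{8γ+2}]. -/

import Mathlib

/-! A vector is moved by `𝒫` only when `‖x‖ > h^{-1/(2γ)}`, and then by at most `‖x‖`. On that
set `‖x‖^{8γ} > h^{-4} ≥ h^{-2}`, so `‖x - 𝒫 x‖² ≤ ‖x‖² ≤ h² ‖x‖^{8γ+2}`; integrating this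
pointwise bound gives the moment estimate. -/

open MeasureTheory ProbabilityTheory
open scoped ProbabilityTheory

/-- The projection operator `𝒫(x) = min {1, h^{-1/(2γ)} ‖x‖⁻¹} • x`
(with `𝒫(0) = 0`, since in `ℝ` we have `0⁻¹ = 0`). -/
noncomputable def proj {d : ℕ} (γ h : ℝ) (x : EuclideanSpace ℝ (Fin d)) :
    EuclideanSpace ℝ (Fin d) :=
  min 1 (h ^ (-(1 : ℝ) / (2 * γ)) * ‖x‖⁻¹) • x

theorem one_le_sq_mul_rpow_of_rpow_lt {γ h r : ℝ} (hγ : 0 < γ) (hh0 : 0 < h) (hh1 : h ≤ 1)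
    (hr : h ^ (-(1 : ℝ) / (2 * γ)) < r) : 1 ≤ h ^ 2 * r ^ (8 * γ) := by
  have hpow : (h ^ (-(1 : ℝ) / (2 * γ))) ^ (8 * γ) = (h ^ 2)⁻¹ ^ 2 := by
    rw [← Real.rpow_mul hh0.le, ← Real.rpow_natCast, ← Real.rpow_natCast, ← Real.rpow_neg_one,
      ← Real.rpow_mul hh0.le, ← Real.rpow_mul hh0.le]
    congr 1
    field_simp
    norm_num
  have hh2 : 0 < h ^ 2 := by positivity
  have hinv : 1 ≤ (h ^ 2)⁻¹ := one_le_inv₀ hh2 |>.mpr (pow_le_one₀ hh0.le hh1)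
  calc 1 = h ^ 2 * (h ^ 2)⁻¹ := (mul_inv_cancel₀ hh2.ne').symm
    _ ≤ h ^ 2 * (h ^ 2)⁻¹ ^ 2 := by gcongr; exact le_self_pow₀ hinv two_ne_zero
    _ ≤ h ^ 2 * r ^ (8 * γ) := by
        rw [← hpow]; gcongr

namespace proj

variable {d : ℕ} {γ h : ℝ}

theorem eq_self_of_norm_le {x : EuclideanSpace ℝ (Fin d)} (hx : ‖x‖ ≤ h ^ (-(1 : ℝ) / (2 * γ))) :
    proj γ h x = x := by
  rcases eq_or_ne x 0 with rfl | hx0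
  · simp [proj]
  have hpos : 0 < ‖x‖ := norm_pos_iff.mpr hx0
  have hone : 1 ≤ h ^ (-(1 : ℝ) / (2 * γ)) * ‖x‖⁻¹ := by
    rwa [← div_eq_mul_inv, one_le_div hpos]
  rw [proj, min_eq_left hone, one_smul]

theorem norm_sub_le (hh : 0 ≤ h) (x : EuclideanSpace ℝ (Fin d)) : ‖x - proj γ h x‖ ≤ ‖x‖ := by
  set m := min 1 (h ^ (-(1 : ℝ) / (2 * γ)) * ‖x‖⁻¹)
  have hm0 : 0 ≤ m := le_min zero_le_one (by positivity)
  have hm1 : m ≤ 1 := min_le_left _ _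
  calc ‖x - proj γ h x‖ = ‖(1 - m) • x‖ := by rw [sub_smul, one_smul, proj]
    _ = (1 - m) * ‖x‖ := by rw [norm_smul, Real.norm_of_nonneg (sub_nonneg.mpr hm1)]
    _ ≤ ‖x‖ := mul_le_of_le_one_left (norm_nonneg x) (by linarith)

theorem norm_sub_sq_le (hγ : 0 < γ) (hh0 : 0 < h) (hh1 : h ≤ 1) (x : EuclideanSpace ℝ (Fin d)) :
    ‖x - proj γ h x‖ ^ 2 ≤ h ^ 2 * ‖x‖ ^ (8 * γ + 2) := by
  by_cases hx : ‖x‖ ≤ h ^ (-(1 : ℝ) / (2 * γ))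
  · rw [eq_self_of_norm_le hx, sub_self, norm_zero, zero_pow two_ne_zero]
    positivity
  · have hpos : 0 < ‖x‖ := (Real.rpow_pos_of_pos hh0 _).trans (not_le.mp hx)
    calc ‖x - proj γ h x‖ ^ 2 ≤ 1 * ‖x‖ ^ 2 := by
          rw [one_mul]; gcongr; exact norm_sub_le hh0.le x
      _ ≤ h ^ 2 * ‖x‖ ^ (8 * γ) * ‖x‖ ^ 2 := by
          gcongr; exact one_le_sq_mul_rpow_of_rpow_lt hγ hh0 hh1 (not_le.mp hx)
      _ = h ^ 2 * ‖x‖ ^ (8 * γ + 2) := by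
          rw [Real.rpow_add hpos, Real.rpow_two, mul_assoc]

theorem enorm_sub_sq_le (hγ : 0 < γ) (hh0 : 0 < h) (hh1 : h ≤ 1)
    (x : EuclideanSpace ℝ (Fin d)) :
    (‖x - proj γ h x‖₊ : ENNReal) ^ 2 ≤ ENNReal.ofReal (h ^ 2) * (‖x‖₊ : ENNReal) ^ (8 * γ + 2) := by
  simp only [← enorm_eq_nnnorm, ← ofReal_norm]
  rw [← ENNReal.ofReal_pow (norm_nonneg _),
    ENNReal.ofReal_rpow_of_nonneg (norm_nonneg _) (by positivity), ← ENNReal.ofReal_mul (by positivity)]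
  exact ENNReal.ofReal_le_ofReal (norm_sub_sq_le hγ hh0 hh1 x)

end proj

theorem stmt_18_general {d : ℕ} (γ h : ℝ) (hγ : 1 ≤ γ) (hh0 : 0 < h) (hh1 : h ≤ 1)
    {Ω : Type*} [MeasureSpace Ω]
    (ζ : Ω → EuclideanSpace ℝ (Fin d)) :
    ∫⁻ ω, (‖ζ ω - proj γ h (ζ ω)‖₊ : ENNReal) ^ 2 ∂ℙ ≤
      1 * ENNReal.ofReal (h ^ 2) * (∫⁻ ω, (‖ζ ω‖₊ : ENNReal) ^ (8 * γ + 2) ∂ℙ) := by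
  rw [one_mul, ← lintegral_const_mul' _ _ ENNReal.ofReal_ne_top]
  exact lintegral_mono fun ω ↦ proj.enorm_sub_sq_le (by linarith) hh0 hh1 (ζ ω)

/-- For a random variable `ζ` with finite moment of order `8γ + 2`,
`E[‖ζ - 𝒫(ζ)‖²] ≤ C h² E[‖ζ‖^{8γ+2}]`, where one may take `C = 1`. -/
theorem stmt_18 {d : ℕ} (γ h : ℝ) (hγ : 1 ≤ γ) (hh0 : 0 < h) (hh1 : h ≤ 1)
    {Ω : Type*} [MeasureSpace Ω] [IsProbabilityMeasure (ℙ : Measure Ω)]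
    (ζ : Ω → EuclideanSpace ℝ (Fin d)) (hζ : Measurable ζ)
    (hmom : ∫⁻ ω, (‖ζ ω‖₊ : ENNReal) ^ (8 * γ + 2) ∂ℙ < ⊤) :
    ∫⁻ ω, (‖ζ ω - proj γ h (ζ ω)‖₊ : ENNReal) ^ 2 ∂ℙ ≤
      1 * ENNReal.ofReal (h ^ 2) * (∫⁻ ω, (‖ζ ω‖₊ : ENNReal) ^ (8 * γ + 2) ∂ℙ) :=
  stmt_18_general γ h hγ hh0 hh1 ζ
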